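/- Suppose the induced augmented tree (X, 𝔈) of a Moran set is rearrangeable. Then there exist a bijection σ : X → X and a constant c ≥ 0 such that |d_v(σ(x), σ(y)) − d(x,y)| ≤ c for all x, y ∈ X, where d is the graph metric of (X, 𝔈) and d_v is the graph metric of the tree (X, 𝔈_v); i.e., there is a near-isometry between (X, 𝔈) and (X, 𝔈_v). -/

import Mathlib

open Metric Set Filter

attribute [local instance] Classical.propDecidable

noncomputable section

namespace MoranPaper

/-- Points of `ℝ^d`. -/
abbrev Pt (d : ℕ) := EuclideanSpace ℝ (Fin d)

/-- `w` is an admissible word: the letter at (0-indexed) position `j`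
(corresponding to step `j+1`) lies in `[1, n j]`, where `n j` encodes `n_{j+1}`. -/
def IsWord (n : ℕ → ℕ) (w : List ℕ) : Prop :=
  ∀ j (h : j < w.length), 1 ≤ w.get ⟨j, h⟩ ∧ w.get ⟨j, h⟩ ≤ n j

/-- The set `D_k` of words of length `k`. -/
def WordsLen (n : ℕ → ℕ) (k : ℕ) : Set (List ℕ) := {w | IsWord n w ∧ w.length = k}

/-- A Moran structure on the data `(J, (n_k), (r_k))`:  a family of sets `J_w`
indexed by words, with `J_∅ = J`, each `J_w` a similar copy of `J`, children
contained in the parent with pairwise disjoint interiors, and prescribed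
diameter ratios. -/
structure MoranStructure (d : ℕ) (J : Set (Pt d)) (n : ℕ → ℕ) (r : ℕ → ℝ) where
  Jset : List ℕ → Set (Pt d)
  root_eq : Jset [] = J
  similar : ∀ w, IsWord n w → ∃ (S : Pt d → Pt d) (c : ℝ), 0 < c ∧
      (∀ x y, dist (S x) (S y) = c * dist x y) ∧ Jset w = S '' J
  nested : ∀ w, IsWord n w → ∀ a, 1 ≤ a → a ≤ n w.length →
      Jset (w ++ [a]) ⊆ Jset w
  disjoint_int : ∀ w, IsWord n w → ∀ a b, 1 ≤ a → a ≤ n w.length →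
      1 ≤ b → b ≤ n w.length → a ≠ b →
      interior (Jset (w ++ [a])) ∩ interior (Jset (w ++ [b])) = ∅
  diam_ratio : ∀ w, IsWord n w → ∀ a, 1 ≤ a → a ≤ n w.length →
      Metric.diam (Jset (w ++ [a])) = r w.length * Metric.diam (Jset w)

/-- Standing hypotheses on the Moran data; `R` plays the role of `r = inf_k r_k > 0`. -/
structure MoranData (d : ℕ) (J : Set (Pt d)) (n : ℕ → ℕ) (r : ℕ → ℝ) (R : ℝ) : Prop where
  dim_pos : 1 ≤ d
  compact : IsCompact J
  int_nonempty : (interior J).Nonempty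
  two_le : ∀ k, 2 ≤ n k
  r_pos : ∀ k, 0 < r k
  r_lt_one : ∀ k, r k < 1
  nr_le : ∀ k, (n k : ℝ) * r k ≤ 1
  R_pos : 0 < R
  R_inf : R = ⨅ k, r k

/-- The Moran set `E = ⋂_k ⋃_{w ∈ D_k} J_w`. -/
def MoranSet {d : ℕ} {J : Set (Pt d)} {n : ℕ → ℕ} {r : ℕ → ℝ}
    (M : MoranStructure d J n r) : Set (Pt d) :=
  ⋂ k, ⋃ w ∈ WordsLen n k, M.Jset w

/-- The product `r_1 ⋯ r_k`. -/
def prodR (r : ℕ → ℝ) (k : ℕ) : ℝ := ∏ j ∈ Finset.range k, r j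

/-- The level `X_m`:  `X_0 = {∅}`, and for `m ≥ 1`,
`X_m = {w : r_1⋯r_k ≤ R^m < r_1⋯r_{k-1}}` where `k` is the length of `w`. -/
def XLevel (n : ℕ → ℕ) (r : ℕ → ℝ) (R : ℝ) (m : ℕ) : Set (List ℕ) :=
  if m = 0 then {([] : List ℕ)}
  else {w | IsWord n w ∧ prodR r w.length ≤ R ^ m ∧ R ^ m < prodR r (w.length - 1)}

/-- The vertex set `X = ⋃_m X_m`. -/
def XV (n : ℕ → ℕ) (r : ℕ → ℝ) (R : ℝ) : Set (List ℕ) := ⋃ m, XLevel n r R m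

/-- `v` is the parent (first ancestor) of `u`:  `v` is the initial segment
of `u` lying one level above `u`. -/
def IsParent (n : ℕ → ℕ) (r : ℕ → ℝ) (R : ℝ) (v u : List ℕ) : Prop :=
  v ≠ u ∧ v <+: u ∧ ∃ m, 1 ≤ m ∧ u ∈ XLevel n r R m ∧ v ∈ XLevel n r R (m - 1)

/-- Vertical edge relation `𝔈_v` (as an unordered relation). -/
def Evert (n : ℕ → ℕ) (r : ℕ → ℝ) (R : ℝ) (u v : List ℕ) : Prop :=
  IsParent n r R u v ∨ IsParent n r R v u

variable {d : ℕ} {J : Set (Pt d)} {n : ℕ → ℕ} {r : ℕ → ℝ}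

/-- Horizontal edge relation `𝔈_h`: distinct words on a common level `X_m`, `m ≥ 1`,
whose Moran pieces intersect. -/
def Ehor (M : MoranStructure d J n r) (R : ℝ) (u v : List ℕ) : Prop :=
  u ≠ v ∧ ∃ m, 1 ≤ m ∧ u ∈ XLevel n r R m ∧ v ∈ XLevel n r R m ∧
    (M.Jset u ∩ M.Jset v).Nonempty

/-- The induced augmented tree `(X, 𝔈)`, `𝔈 = 𝔈_v ∪ 𝔈_h`, as a graph on all words
(words outside `X` are isolated vertices). -/
def AugGraph (M : MoranStructure d J n r) (R : ℝ) : SimpleGraph (List ℕ) where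
  Adj u v := Evert n r R u v ∨ Ehor M R u v
  symm := by
    constructor
    rintro u v (h | ⟨hne, m, hm, hu, hv, hJ⟩)
    · exact Or.inl h.symm
    · exact Or.inr ⟨hne.symm, m, hm, hv, hu, by rwa [Set.inter_comm]⟩
  loopless := by
    constructor
    rintro u ((⟨h, -⟩ | ⟨h, -⟩) | ⟨h, -⟩) <;> exact h rfl

/-- The tree `(X, 𝔈_v)` with only the vertical edges. -/
def TreeGraph (n : ℕ → ℕ) (r : ℕ → ℝ) (R : ℝ) : SimpleGraph (List ℕ) where
  Adj u v := Evert n r R u v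
  symm := ⟨fun _ _ h => h.symm⟩
  loopless := by constructor; rintro u (⟨h, -⟩ | ⟨h, -⟩) <;> exact h rfl

/-- The graph `(X, 𝔈_h)` with only the horizontal edges. -/
def HorGraph (M : MoranStructure d J n r) (R : ℝ) : SimpleGraph (List ℕ) where
  Adj u v := Ehor M R u v
  symm := by
    constructor
    rintro u v ⟨hne, m, hm, hu, hv, hJ⟩
    exact ⟨hne.symm, m, hm, hv, hu, by rwa [Set.inter_comm]⟩
  loopless := by constructor; rintro u ⟨h, -⟩; exact h rfl

/-- Gromov product `⟨x,y⟩ = (d(o,x) + d(o,y) - d(x,y))/2` with respect to a base point `o`. -/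
def gromovD {V : Type*} (G : SimpleGraph V) (o x y : V) : ℝ :=
  ((G.dist o x : ℝ) + (G.dist o y : ℝ) - (G.dist x y : ℝ)) / 2

/-- Condition (H): there is `C' > 0` such that on every level `X_m` (`m ≥ 1`),
two pieces either intersect or are at distance at least `C' R^m`. -/
def CondH (M : MoranStructure d J n r) (R : ℝ) : Prop :=
  ∃ C' : ℝ, 0 < C' ∧ ∀ m, 1 ≤ m → ∀ u ∈ XLevel n r R m, ∀ v ∈ XLevel n r R m,
    (M.Jset u ∩ M.Jset v).Nonempty ∨
    ∀ p ∈ M.Jset u, ∀ q ∈ M.Jset v, C' * R ^ m ≤ dist p q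

/-- `T` is a horizontal connected component: a maximal subset of some level `X_m`
which is connected in the horizontal graph. -/
def IsHCC (M : MoranStructure d J n r) (R : ℝ) (T : Set (List ℕ)) : Prop :=
  ∃ m, T ⊆ XLevel n r R m ∧ ((HorGraph M R).induce T).Connected ∧
    ∀ T', T ⊆ T' → T' ⊆ XLevel n r R m → ((HorGraph M R).induce T').Connected → T' = T

/-- The common suffix set `Σ_m` of the level `X_m`: words `w` with `uw ∈ X_{m+1}`
for (some, equivalently all) `u ∈ X_m`. -/
def SigmaSet (n : ℕ → ℕ) (r : ℕ → ℝ) (R : ℝ) (m : ℕ) : Set (List ℕ) :=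
  {w | ∃ u ∈ XLevel n r R m, u ++ w ∈ XLevel n r R (m + 1)}

/-- The offspring set `TΣ_m ⊆ X_{m+1}` of a set `T ⊆ X_m`. -/
def TSigma (n : ℕ → ℕ) (r : ℕ → ℝ) (R : ℝ) (m : ℕ) (T : Set (List ℕ)) : Set (List ℕ) :=
  {x | ∃ u ∈ T, ∃ w ∈ SigmaSet n r R m, x = u ++ w}

/-- The augmented tree is rearrangeable:  horizontal connected components have
uniformly bounded cardinality, and for every horizontal connected component `T ⊆ X_m`
with `#T = b`, the offspring set `TΣ_m` can be partitioned into `b` groups (indexed by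
the elements of `T`), each group being a union of horizontal connected components and
having exactly `#Σ_m` elements. -/
def Rearrangeable (M : MoranStructure d J n r) (R : ℝ) : Prop :=
  (∃ L : ℕ, ∀ T, IsHCC M R T → T.Finite ∧ T.ncard ≤ L) ∧
  ∀ m T, T ⊆ XLevel n r R m → IsHCC M R T →
    ∃ g : List ℕ → List ℕ,
      (∀ x ∈ TSigma n r R m T, g x ∈ T) ∧
      (∀ Z, IsHCC M R Z → Z ⊆ TSigma n r R m T → ∀ x ∈ Z, ∀ y ∈ Z, g x = g y) ∧
      (∀ i ∈ T, {x ∈ TSigma n r R m T | g x = i}.ncard = (SigmaSet n r R m).ncard)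

/-- `C` is a (topological) connected component of `A`. -/
def IsRelCC {α : Type*} [TopologicalSpace α] (C A : Set α) : Prop :=
  ∃ x ∈ A, C = connectedComponentIn A x

/-- Condition (v): there is `L` such that any `T ⊆ D_{k-1}` for which `⋃_{i∈T} J_i`
is a connected component of `⋃_{i∈D_{k-1}} J_i` satisfies `#T ≤ L`. -/
def CondV (M : MoranStructure d J n r) : Prop :=
  ∃ L : ℕ, ∀ k, 1 ≤ k → ∀ T ⊆ WordsLen n (k - 1),
    IsRelCC (⋃ i ∈ T, M.Jset i) (⋃ i ∈ WordsLen n (k - 1), M.Jset i) →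
    T.Finite ∧ T.ncard ≤ L

/-- Condition (vi): for any such `T` (with `#T = b`), the connected components of
`⋃_{i∈T} ⋃_{j=1}^{n_k} J_{ij}` can be partitioned into `b` groups (indexed by the
elements of `T`) so that the union of the components in each group is a union of
exactly `n_k` of the sets `J_{ij}`. -/
def CondVI (M : MoranStructure d J n r) : Prop :=
  ∀ k, 1 ≤ k → ∀ T ⊆ WordsLen n (k - 1),
    IsRelCC (⋃ i ∈ T, M.Jset i) (⋃ i ∈ WordsLen n (k - 1), M.Jset i) →
    ∃ f : Set (Pt d) → List ℕ,
      (∀ C, IsRelCC C (⋃ u ∈ T, ⋃ j ∈ Set.Icc 1 (n (k - 1)), M.Jset (u ++ [j])) → f C ∈ T) ∧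
      ∀ i ∈ T, ∃ W : Finset (List ℕ × ℕ),
        (∀ p ∈ W, p.1 ∈ T ∧ 1 ≤ p.2 ∧ p.2 ≤ n (k - 1)) ∧
        W.card = n (k - 1) ∧
        (⋃ C ∈ {C | IsRelCC C (⋃ u ∈ T, ⋃ j ∈ Set.Icc 1 (n (k - 1)), M.Jset (u ++ [j]))
            ∧ f C = i}, C)
          = ⋃ p ∈ W, M.Jset (p.1 ++ [p.2])

/-- A geodesic ray of the induced augmented tree: `u_m ∈ X_m` and `u_m = (u_{m+1})⁻¹`. -/
def IsRay (n : ℕ → ℕ) (r : ℕ → ℝ) (R : ℝ) (u : ℕ → List ℕ) : Prop :=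
  (∀ m, u m ∈ XLevel n r R m) ∧ ∀ m, IsParent n r R (u m) (u (m + 1))

/-- Geodesic rays as a type. -/
def MRay (n : ℕ → ℕ) (r : ℕ → ℝ) (R : ℝ) := {u : ℕ → List ℕ // IsRay n r R u}

/-- `t(ξ,η) = liminf_m ⟨u_m, v_m⟩`, valued in `EReal`. -/
def tLim {V : Type*} (G : SimpleGraph V) (o : V) (u v : ℕ → V) : EReal :=
  Filter.liminf (fun m => ((gromovD G o (u m) (v m) : ℝ) : EReal)) Filter.atTop

/-- `R ^ t` for `t ∈ EReal`, with the convention `R ^ ∞ = 0`. -/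
def rpowE (R : ℝ) (t : EReal) : ℝ := if t = ⊤ then 0 else R ^ t.toReal

/-- The hyperbolic boundary of the induced augmented tree: equivalence classes of
geodesic rays, two rays being equivalent when `t(ξ,η) = ∞`. -/
def MBoundary (M : MoranStructure d J n r) (R : ℝ) :=
  Quot (fun ξ η : MRay n r R => tLim (AugGraph M R) [] ξ.1 η.1 = ⊤)

/-- The class of a ray in the hyperbolic boundary. -/
def mkB (M : MoranStructure d J n r) (R : ℝ) (ξ : MRay n r R) : MBoundary M R :=
  Quot.mk _ ξ

/-- The metric `ρ_a` on the hyperbolic boundary: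
`ρ_a(ξ̄,η̄) = exp(-a · inf{t(ξ,η) : ξ ∈ ξ̄, η ∈ η̄})` for distinct classes, and `0` otherwise. -/
def mrho (M : MoranStructure d J n r) (R a : ℝ) (p q : MBoundary M R) : ℝ :=
  if p = q then 0
  else Real.exp (-a * (sInf {s : EReal | ∃ ξ η : MRay n r R,
    mkB M R ξ = p ∧ mkB M R η = q ∧ s = tLim (AugGraph M R) [] ξ.1 η.1}).toReal)

/-- An abstract augmented tree in the sense of Kaimanovich: a rooted tree (encoded
by a parent map and a level function) together with a symmetric horizontal edge
relation `Eh` joining distinct vertices of a common level whose parents are equal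
or horizontally joined. -/
structure AugmentedTree (V : Type*) where
  root : V
  parent : V → V
  lvl : V → ℕ
  lvl_root : lvl root = 0
  lvl_parent : ∀ x, x ≠ root → lvl (parent x) + 1 = lvl x
  Eh : V → V → Prop
  Eh_symm : ∀ x y, Eh x y → Eh y x
  Eh_ne : ∀ x y, Eh x y → x ≠ y
  Eh_lvl : ∀ x y, Eh x y → lvl x = lvl y
  Eh_parent : ∀ x y, Eh x y → parent x = parent y ∨ Eh (parent x) (parent y)

namespace AugmentedTree

variable {V : Type*} (T : AugmentedTree V)

/-- The vertical (tree) edge relation. -/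
def Ev (x y : V) : Prop :=
  (x ≠ T.root ∧ T.parent x = y) ∨ (y ≠ T.root ∧ T.parent y = x)

/-- The graph `(X, 𝔈)`, `𝔈 = 𝔈_v ∪ 𝔈_h`. -/
def graph : SimpleGraph V where
  Adj x y := x ≠ y ∧ (T.Ev x y ∨ T.Eh x y)
  symm := by
    constructor
    rintro x y ⟨hne, h | h⟩
    · exact ⟨hne.symm, Or.inl h.symm⟩
    · exact ⟨hne.symm, Or.inr (T.Eh_symm x y h)⟩
  loopless := ⟨fun _ h => h.1 rfl⟩

/-- Gromov product `⟨x,y⟩ = (|x| + |y| - d(x,y))/2` (one has `d(o,x) = |x| = lvl x`). -/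
def gromov (x y : V) : ℝ :=
  ((T.lvl x : ℝ) + (T.lvl y : ℝ) - (T.graph.dist x y : ℝ)) / 2

/-- Gromov hyperbolicity. -/
def Hyperbolic : Prop :=
  ∃ δ : ℝ, 0 ≤ δ ∧ ∀ x y z : V,
    min (T.gromov x z) (T.gromov z y) - δ ≤ T.gromov x y

/-- A geodesic ray from the root: `x_0 = o` and `x_m = (x_{m+1})⁻¹`. -/
def IsRayT (x : ℕ → V) : Prop := x 0 = T.root ∧ ∀ m, T.parent (x (m + 1)) = x m

/-- Geodesic rays from the root, as a type. -/
def Ray := {x : ℕ → V // T.IsRayT x}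

/-- `t(ξ,η) = liminf_m ⟨x_m, y_m⟩`, valued in `EReal`. -/
def tvalT (ξ η : T.Ray) : EReal :=
  Filter.liminf (fun m => ((T.gromov (ξ.1 m) (η.1 m) : ℝ) : EReal)) Filter.atTop

/-- The hyperbolic boundary: classes of geodesic rays, two rays being equivalent
when `t(ξ,η) = ∞`. -/
def Boundary := Quot (fun ξ η : T.Ray => T.tvalT ξ η = ⊤)

/-- The class of a ray in the boundary. -/
def mkBd (ξ : T.Ray) : T.Boundary := Quot.mk _ ξ

/-- The metric `ρ_a` on the hyperbolic boundary. -/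
def rho (a : ℝ) (p q : T.Boundary) : ℝ :=
  if p = q then 0
  else Real.exp (-a * (sInf {s : EReal | ∃ ξ η : T.Ray,
    T.mkBd ξ = p ∧ T.mkBd η = q ∧ s = T.tvalT ξ η}).toReal)

end AugmentedTree

end MoranPaper

end

/-!
All words of a level `X_m` have one common length, so the vertical graph is the prefix tree and
`d_v(x, y) = |x| + |y| - 2 ℓ_v(x, y)`, where `ℓ_v` is the level of the deepest common ancestor.
In the augmented tree the same formula holds up to the bound `L` on the size of horizontal
components, with `ℓ_v` replaced by the deepest level `ℓ` at which the ancestors of `x` and `y` lie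
in one horizontal component: every edge changes `|z| - 2 ℓ(z, y)` by at most one, and a walk that
climbs to level `ℓ`, crosses a component in at most `L` steps and descends realises the bound.

The bijection `σ` is built level by level: rearrangeability gives every `u ∈ X_m` a group of
exactly `#Σ_m` offspring, which is sent bijectively onto the children of `σ u`. As a horizontal
component is never split between groups, the images of points whose ancestors are horizontally
connected at level `ℓ` share an ancestor at level `ℓ - 1`; conversely common ancestors of images
come from horizontally connected ancestors. Hence `ℓ - 1 ≤ ℓ_v(σ x, σ y) ≤ ℓ(x, y)`, and the two
distances differ by at most `L + 2`.
-/

noncomputable section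

namespace MoranPaper

open SimpleGraph

variable {d : ℕ} {J : Set (Pt d)} {n : ℕ → ℕ} {r : ℕ → ℝ} {R : ℝ}

section Words

theorem isWord_iff {w : List ℕ} :
    IsWord n w ↔ ∀ j (h : j < w.length), 1 ≤ w[j] ∧ w[j] ≤ n j := by
  simp only [IsWord, List.get_eq_getElem]

theorem IsWord.of_prefix {v w : List ℕ} (hw : IsWord n w) (hvw : v <+: w) : IsWord n v := by
  rw [isWord_iff] at hw ⊢
  intro j hj
  simpa only [hvw.getElem hj] using hw j (hj.trans_le hvw.length_le)

theorem IsWord.append_of_length_eq {u u' w : List ℕ} (hw : IsWord n (u ++ w)) (hu' : IsWord n u')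
    (hlen : u'.length = u.length) : IsWord n (u' ++ w) := by
  rw [isWord_iff] at hw hu' ⊢
  intro j hj
  by_cases hju : j < u'.length
  · simpa only [List.getElem_append_left hju] using hu' j hju
  · have hj' : j < (u ++ w).length := by simpa [hlen] using hj
    simpa only [List.getElem_append_right (not_lt.mp hju),
      List.getElem_append_right (show u.length ≤ j by omega), hlen] using hw j hj'

theorem finite_setOf_isWord_length (n : ℕ → ℕ) (k : ℕ) :
    {w | IsWord n w ∧ w.length = k}.Finite := by
  let N := ∑ j ∈ Finset.range k, n j
  refine (Set.finite_range fun f : Fin k → Fin (N + 1) => List.ofFn fun i => (f i : ℕ)).subset ?_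
  rintro w ⟨hw, rfl⟩
  refine ⟨fun i => ⟨w[(i : ℕ)], ?_⟩, List.ofFn_getElem⟩
  have hle : n i ≤ N := Finset.single_le_sum (fun _ _ => Nat.zero_le _) (Finset.mem_range.mpr i.2)
  have := (isWord_iff.mp hw i i.2).2
  omega

end Words

section Levels

theorem MoranData.le_r (hD : MoranData d J n r R) (k : ℕ) : R ≤ r k := by
  rw [hD.R_inf]
  exact ciInf_le ⟨0, by rintro _ ⟨k, rfl⟩; exact (hD.r_pos k).le⟩ k

theorem MoranData.R_lt_one (hD : MoranData d J n r R) : R < 1 :=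
  (hD.le_r 0).trans_lt (hD.r_lt_one 0)

theorem MoranData.r_le_half (hD : MoranData d J n r R) (k : ℕ) : r k ≤ 1 / 2 := by
  have h2 : (2 : ℝ) ≤ n k := by exact_mod_cast hD.two_le k
  nlinarith [hD.nr_le k, hD.r_pos k]

theorem MoranData.prodR_pos (hD : MoranData d J n r R) (k : ℕ) : 0 < prodR r k :=
  Finset.prod_pos fun j _ => hD.r_pos j

theorem prodR_succ (k : ℕ) : prodR r (k + 1) = prodR r k * r k := Finset.prod_range_succ _ _

theorem MoranData.prodR_antitone (hD : MoranData d J n r R) : Antitone (prodR r) :=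
  antitone_nat_of_succ_le fun k => by
    rw [prodR_succ]
    exact mul_le_of_le_one_right (hD.prodR_pos k).le (hD.r_lt_one k).le

theorem MoranData.exists_prodR_le (hD : MoranData d J n r R) (m : ℕ) :
    ∃ k, prodR r k ≤ R ^ m := by
  obtain ⟨k, hk⟩ := exists_pow_lt_of_lt_one (pow_pos hD.R_pos m) (by norm_num : (1 / 2 : ℝ) < 1)
  refine ⟨k, le_trans ?_ hk.le⟩
  calc prodR r k ≤ ∏ _j ∈ Finset.range k, (1 / 2 : ℝ) :=
        Finset.prod_le_prod (fun j _ => (hD.r_pos j).le) fun j _ => hD.r_le_half j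
    _ = (1 / 2) ^ k := by rw [Finset.prod_const, Finset.card_range]

/-- The common length of the words of the level `X_m`. -/
def levelLength (r : ℕ → ℝ) (R : ℝ) (m : ℕ) : ℕ := sInf {k | prodR r k ≤ R ^ m}

theorem MoranData.levelLength_le_iff (hD : MoranData d J n r R) {m k : ℕ} :
    levelLength r R m ≤ k ↔ prodR r k ≤ R ^ m :=
  ⟨fun h => (hD.prodR_antitone h).trans (Nat.sInf_mem (hD.exists_prodR_le m)),
    fun h => Nat.sInf_le h⟩

theorem levelLength_zero : levelLength r R 0 = 0 :=
  Nat.eq_zero_of_le_zero (Nat.sInf_le (by simp [prodR]))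

theorem MoranData.pow_succ_lt_prodR_levelLength (hD : MoranData d J n r R) (m : ℕ) :
    R ^ (m + 1) < prodR r (levelLength r R m) := by
  rcases Nat.eq_zero_or_eq_succ_pred (levelLength r R m) with h | h
  · rw [h]
    simpa [prodR] using pow_lt_one₀ hD.R_pos.le hD.R_lt_one m.succ_ne_zero
  · rw [h, prodR_succ, pow_succ]
    have hlt : R ^ m < prodR r (levelLength r R m).pred := by
      by_contra! hle
      have := hD.levelLength_le_iff.mpr hle
      omega
    exact mul_lt_mul hlt (hD.le_r _) hD.R_pos (hD.prodR_pos _).le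

theorem MoranData.levelLength_strictMono (hD : MoranData d J n r R) :
    StrictMono (levelLength r R) :=
  strictMono_nat_of_lt_succ fun m => by
    by_contra! h
    exact (hD.pow_succ_lt_prodR_levelLength m).not_ge (hD.levelLength_le_iff.mp h)

theorem MoranData.mem_XLevel_iff (hD : MoranData d J n r R) {w : List ℕ} {m : ℕ} :
    w ∈ XLevel n r R m ↔ IsWord n w ∧ w.length = levelLength r R m := by
  rcases Nat.eq_zero_or_pos m with rfl | hm
  · simp only [XLevel, if_pos, Set.mem_singleton_iff, levelLength_zero, List.length_eq_zero_iff]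
    exact ⟨fun h => ⟨h ▸ fun j hj => absurd hj (by simp), h⟩, And.right⟩
  simp only [XLevel, if_neg hm.ne', Set.mem_ofPred_eq, and_congr_right_iff]
  intro _
  constructor
  · rintro ⟨hle, hlt⟩
    refine le_antisymm (not_lt.mp fun h => hlt.not_ge ?_) (hD.levelLength_le_iff.mpr hle)
    exact (hD.prodR_antitone (by omega)).trans (hD.levelLength_le_iff.mp le_rfl)
  · intro hlen
    rw [hlen]
    refine ⟨hD.levelLength_le_iff.mp le_rfl, not_le.mp fun hle => ?_⟩
    have := hD.levelLength_le_iff.mpr hle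
    have : 0 < levelLength r R m := by
      rw [← levelLength_zero (r := r) (R := R)]; exact hD.levelLength_strictMono hm
    omega

theorem MoranData.eq_of_mem_XLevel (hD : MoranData d J n r R) {w : List ℕ} {m m' : ℕ}
    (hw : w ∈ XLevel n r R m) (hw' : w ∈ XLevel n r R m') : m = m' :=
  hD.levelLength_strictMono.injective <|
    (hD.mem_XLevel_iff.mp hw).2.symm.trans (hD.mem_XLevel_iff.mp hw').2

theorem MoranData.XLevel_finite (hD : MoranData d J n r R) (m : ℕ) : (XLevel n r R m).Finite :=
  (finite_setOf_isWord_length n (levelLength r R m)).subset fun _ hw => hD.mem_XLevel_iff.mp hw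

end Levels

section Ancestors

def anc (r : ℕ → ℝ) (R : ℝ) (j : ℕ) (w : List ℕ) : List ℕ := w.take (levelLength r R j)

theorem anc_zero (w : List ℕ) : anc r R 0 w = [] := by simp [anc, levelLength_zero]

theorem MoranData.anc_anc (hD : MoranData d J n r R) {i j : ℕ} (hij : i ≤ j) (w : List ℕ) :
    anc r R i (anc r R j w) = anc r R i w := by
  simp only [anc, List.take_take, min_eq_left (hD.levelLength_strictMono.monotone hij)]

theorem MoranData.anc_of_le (hD : MoranData d J n r R) {w : List ℕ} {m j : ℕ}
    (hw : w ∈ XLevel n r R m) (hmj : m ≤ j) : anc r R j w = w :=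
  List.take_of_length_le <| (hD.mem_XLevel_iff.mp hw).2 ▸ hD.levelLength_strictMono.monotone hmj

theorem MoranData.anc_self (hD : MoranData d J n r R) {w : List ℕ} {m : ℕ}
    (hw : w ∈ XLevel n r R m) : anc r R m w = w :=
  hD.anc_of_le hw le_rfl

theorem MoranData.anc_mem (hD : MoranData d J n r R) {w : List ℕ} {m j : ℕ}
    (hw : w ∈ XLevel n r R m) (hj : j ≤ m) : anc r R j w ∈ XLevel n r R j := by
  rw [hD.mem_XLevel_iff] at hw ⊢
  refine ⟨hw.1.of_prefix (List.take_prefix _ _), ?_⟩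
  simp only [anc, List.length_take, hw.2, min_eq_left (hD.levelLength_strictMono.monotone hj)]

theorem MoranData.anc_append (hD : MoranData d J n r R) {u : List ℕ} {m : ℕ}
    (hu : u ∈ XLevel n r R m) (w : List ℕ) : anc r R m (u ++ w) = u := by
  simp [anc, ← (hD.mem_XLevel_iff.mp hu).2]

theorem MoranData.isParent_iff (hD : MoranData d J n r R) {v u : List ℕ} :
    IsParent n r R v u ↔ ∃ m, u ∈ XLevel n r R (m + 1) ∧ v = anc r R m u := by
  constructor
  · rintro ⟨-, hvu, m, hm, hu, hv⟩
    obtain ⟨m, rfl⟩ := Nat.exists_eq_add_of_le' hm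
    refine ⟨m, hu, ?_⟩
    rw [List.prefix_iff_eq_take.mp hvu, (hD.mem_XLevel_iff.mp hv).2]
    rfl
  · rintro ⟨m, hu, rfl⟩
    have hv := hD.anc_mem hu m.le_succ
    refine ⟨fun h => ?_, List.take_prefix _ _, m + 1, m.succ_pos, hu, hv⟩
    exact (Nat.succ_ne_self m) (hD.eq_of_mem_XLevel (h ▸ hv) hu).symm

theorem MoranData.treeGraph_adj_iff (hD : MoranData d J n r R) {u v : List ℕ} :
    (TreeGraph n r R).Adj u v ↔ ∃ m, (v ∈ XLevel n r R (m + 1) ∧ u = anc r R m v) ∨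
      (u ∈ XLevel n r R (m + 1) ∧ v = anc r R m u) := by
  simp only [TreeGraph, Evert, hD.isParent_iff, ← exists_or]

theorem MoranData.mem_SigmaSet_iff (hD : MoranData d J n r R) {u w : List ℕ} {m : ℕ}
    (hu : u ∈ XLevel n r R m) : w ∈ SigmaSet n r R m ↔ u ++ w ∈ XLevel n r R (m + 1) := by
  refine ⟨fun ⟨u₀, hu₀, hu₀w⟩ => ?_, fun h => ⟨u, hu, h⟩⟩
  rw [hD.mem_XLevel_iff] at hu hu₀ hu₀w ⊢
  refine ⟨hu₀w.1.append_of_length_eq hu.1 (hu.2.trans hu₀.2.symm), ?_⟩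
  simpa [hu.2, hu₀.2] using hu₀w.2

theorem MoranData.drop_mem_SigmaSet (hD : MoranData d J n r R) {x : List ℕ} {m : ℕ}
    (hx : x ∈ XLevel n r R (m + 1)) : x.drop (levelLength r R m) ∈ SigmaSet n r R m :=
  (hD.mem_SigmaSet_iff (hD.anc_mem hx m.le_succ)).mpr (by rwa [anc, List.take_append_drop])

theorem MoranData.SigmaSet_finite (hD : MoranData d J n r R) (m : ℕ) :
    (SigmaSet n r R m).Finite :=
  ((hD.XLevel_finite (m + 1)).image (List.drop (levelLength r R m))).subset
    fun _ ⟨u, hu, huw⟩ => ⟨u ++ _, huw, by simp [← (hD.mem_XLevel_iff.mp hu).2]⟩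

end Ancestors

section Horizontal

def hClass (M : MoranStructure d J n r) (R : ℝ) (u : List ℕ) : Set (List ℕ) :=
  ((HorGraph M R).connectedComponentMk u).supp

theorem MoranStructure.Jset_subset_of_prefix (M : MoranStructure d J n r) {u v : List ℕ}
    (hu : IsWord n u) (hvu : v <+: u) : M.Jset u ⊆ M.Jset v := by
  induction u using List.reverseRecOn with
  | nil => rw [List.prefix_nil.mp hvu]
  | append_singleton us a ih =>
    rcases List.prefix_concat_iff.mp hvu with rfl | hvus
    · exact subset_rfl
    have hus := hu.of_prefix (List.prefix_append us [a])
    have ha := isWord_iff.mp hu us.length (by simp)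
    rw [List.getElem_concat_length rfl] at ha
    exact (M.nested us hus a ha.1 ha.2).trans (ih hus hvus)

variable {M : MoranStructure d J n r}

theorem MoranData.ehor_anc (hD : MoranData d J n r R) {u v : List ℕ} (h : Ehor M R u v) (j : ℕ) :
    anc r R j u = anc r R j v ∨ Ehor M R (anc r R j u) (anc r R j v) := by
  obtain ⟨hne, m, hm, hu, hv, hJ⟩ := h
  by_cases hmj : m ≤ j
  · rw [hD.anc_of_le hu hmj, hD.anc_of_le hv hmj]
    exact Or.inr ⟨hne, m, hm, hu, hv, hJ⟩
  refine or_iff_not_imp_left.mpr fun hne' => ⟨hne', j, ?_, hD.anc_mem hu (by omega),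
    hD.anc_mem hv (by omega), hJ.mono (Set.inter_subset_inter ?_ ?_)⟩
  · exact Nat.pos_of_ne_zero fun hj => hne' (by simp [hj, anc_zero])
  · exact M.Jset_subset_of_prefix (hD.mem_XLevel_iff.mp hu).1 (List.take_prefix _ _)
  · exact M.Jset_subset_of_prefix (hD.mem_XLevel_iff.mp hv).1 (List.take_prefix _ _)

theorem MoranData.horGraph_reachable_anc (hD : MoranData d J n r R) {u v : List ℕ}
    (h : (HorGraph M R).Reachable u v) (j : ℕ) :
    (HorGraph M R).Reachable (anc r R j u) (anc r R j v) := by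
  obtain ⟨p⟩ := h
  induction p with
  | nil => rfl
  | cons hadj _ ih =>
    refine Reachable.trans ?_ ih
    rcases hD.ehor_anc hadj j with heq | hadj'
    · rw [heq]
    · exact Adj.reachable hadj'

theorem MoranData.mem_XLevel_of_horGraph_reachable (hD : MoranData d J n r R) {u v : List ℕ}
    {m : ℕ} (h : (HorGraph M R).Reachable u v) (hu : u ∈ XLevel n r R m) : v ∈ XLevel n r R m := by
  obtain ⟨p⟩ := h
  induction p with
  | nil => exact hu
  | cons hadj _ ih =>
    obtain ⟨-, m', -, hu', hv', -⟩ := hadj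
    exact ih (hD.eq_of_mem_XLevel hu hu' ▸ hv')

theorem mem_hClass {u v : List ℕ} : v ∈ hClass M R u ↔ (HorGraph M R).Reachable v u := by
  rw [hClass, ConnectedComponent.mem_supp_iff, ConnectedComponent.eq]

theorem hClass_eq_of_reachable {u v : List ℕ} (h : (HorGraph M R).Reachable u v) :
    hClass M R u = hClass M R v := by
  rw [hClass, hClass, ConnectedComponent.eq.mpr h]

theorem MoranData.hClass_subset_XLevel (hD : MoranData d J n r R) {u : List ℕ} {m : ℕ}
    (hu : u ∈ XLevel n r R m) : hClass M R u ⊆ XLevel n r R m :=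
  fun _ hv => hD.mem_XLevel_of_horGraph_reachable (mem_hClass.mp hv).symm hu

theorem MoranData.isHCC_hClass (hD : MoranData d J n r R) {u : List ℕ} {m : ℕ}
    (hu : u ∈ XLevel n r R m) : IsHCC M R (hClass M R u) := by
  have hmax := ((HorGraph M R).connectedComponentMk u).maximal_connected_induce_supp
  exact ⟨m, hD.hClass_subset_XLevel hu, hmax.prop,
    fun T hT _ hconn => (hmax.le_of_ge hconn hT).antisymm hT⟩

theorem exists_horGraph_walk_length_le {u v : List ℕ} {L : ℕ} (hfin : (hClass M R u).Finite)
    (hcard : (hClass M R u).ncard ≤ L) (h : (HorGraph M R).Reachable u v) :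
    ∃ p : (HorGraph M R).Walk u v, p.length ≤ L := by
  classical
  obtain ⟨p⟩ := h
  refine ⟨p.bypass, ?_⟩
  have hsupp : (p.bypass.support.toFinset : Set (List ℕ)) ⊆ hClass M R u := fun w hw =>
    mem_hClass.mpr (p.bypass.takeUntil w (List.mem_toFinset.mp hw)).reachable.symm
  have := Set.ncard_le_ncard hsupp hfin
  rw [Set.ncard_coe_finset, List.toFinset_card_of_nodup p.bypass_isPath.support_nodup,
    Walk.length_support] at this
  omega

end Horizontal

section Rearrangement

variable {M : MoranStructure d J n r}

theorem MoranData.mem_TSigma_iff (hD : MoranData d J n r R) {T : Set (List ℕ)} {m : ℕ}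
    (hT : T ⊆ XLevel n r R m) {x : List ℕ} :
    x ∈ TSigma n r R m T ↔ x ∈ XLevel n r R (m + 1) ∧ anc r R m x ∈ T := by
  constructor
  · rintro ⟨u, hu, w, hw, rfl⟩
    exact ⟨(hD.mem_SigmaSet_iff (hT hu)).mp hw, by rwa [hD.anc_append (hT hu)]⟩
  · rintro ⟨hx, hxT⟩
    exact ⟨_, hxT, _, hD.drop_mem_SigmaSet hx, (List.take_append_drop _ x).symm⟩

def regroup (hre : Rearrangeable M R) (m : ℕ) (T : Set (List ℕ)) : List ℕ → List ℕ :=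
  if h : T ⊆ XLevel n r R m ∧ IsHCC M R T then (hre.2 m T h.1 h.2).choose else id

theorem regroup_spec (hre : Rearrangeable M R) {m : ℕ} {T : Set (List ℕ)}
    (hT : T ⊆ XLevel n r R m) (hT' : IsHCC M R T) :
    (∀ x ∈ TSigma n r R m T, regroup hre m T x ∈ T) ∧
    (∀ Z, IsHCC M R Z → Z ⊆ TSigma n r R m T →
      ∀ x ∈ Z, ∀ y ∈ Z, regroup hre m T x = regroup hre m T y) ∧
    (∀ i ∈ T, {x ∈ TSigma n r R m T | regroup hre m T x = i}.ncard
      = (SigmaSet n r R m).ncard) := by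
  rw [regroup, dif_pos ⟨hT, hT'⟩]
  exact (hre.2 m T hT hT').choose_spec

/-- The index, in the partition of `TΣ_m` for the horizontal component `T` of the parent of
`x ∈ X_{m+1}`, of the group containing `x`. -/
def groupOf (hre : Rearrangeable M R) (m : ℕ) (x : List ℕ) : List ℕ :=
  regroup hre m (hClass M R (anc r R m x)) x

def offspringGroup (hre : Rearrangeable M R) (m : ℕ) (u : List ℕ) : Set (List ℕ) :=
  {x ∈ XLevel n r R (m + 1) | groupOf hre m x = u}

variable (hre : Rearrangeable M R)

theorem MoranData.regroup_eq_groupOf (hD : MoranData d J n r R) {u x : List ℕ} {m : ℕ}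
    (hu : u ∈ XLevel n r R m) (hx : x ∈ TSigma n r R m (hClass M R u)) :
    regroup hre m (hClass M R u) x = groupOf hre m x := by
  rw [groupOf, hClass_eq_of_reachable
    (mem_hClass.mp ((hD.mem_TSigma_iff (hD.hClass_subset_XLevel hu)).mp hx).2)]

theorem MoranData.groupOf_mem_hClass (hD : MoranData d J n r R) {x : List ℕ} {m : ℕ}
    (hx : x ∈ XLevel n r R (m + 1)) : groupOf hre m x ∈ hClass M R (anc r R m x) := by
  have hax := hD.anc_mem hx m.le_succ
  have hxT : x ∈ TSigma n r R m (hClass M R (anc r R m x)) :=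
    (hD.mem_TSigma_iff (hD.hClass_subset_XLevel hax)).mpr ⟨hx, mem_hClass.mpr .rfl⟩
  exact (regroup_spec hre (hD.hClass_subset_XLevel hax) (hD.isHCC_hClass hax)).1 x hxT

theorem MoranData.groupOf_mem_XLevel (hD : MoranData d J n r R) {x : List ℕ} {m : ℕ}
    (hx : x ∈ XLevel n r R (m + 1)) : groupOf hre m x ∈ XLevel n r R m :=
  hD.hClass_subset_XLevel (hD.anc_mem hx m.le_succ) (hD.groupOf_mem_hClass hre hx)

theorem MoranData.groupOf_eq_of_reachable (hD : MoranData d J n r R) {x y : List ℕ} {m : ℕ}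
    (hx : x ∈ XLevel n r R (m + 1)) (hxy : (HorGraph M R).Reachable x y) :
    groupOf hre m x = groupOf hre m y := by
  have hax := hD.anc_mem hx m.le_succ
  have hsub := hD.hClass_subset_XLevel (M := M) hax
  have hZ : hClass M R x ⊆ TSigma n r R m (hClass M R (anc r R m x)) := fun z hz =>
    (hD.mem_TSigma_iff hsub).mpr ⟨hD.mem_XLevel_of_horGraph_reachable (mem_hClass.mp hz).symm hx,
      mem_hClass.mpr (hD.horGraph_reachable_anc (mem_hClass.mp hz) m)⟩
  rw [← hD.regroup_eq_groupOf hre hax (hZ (mem_hClass.mpr .rfl)),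
    ← hD.regroup_eq_groupOf hre hax (hZ (mem_hClass.mpr hxy.symm))]
  exact (regroup_spec hre hsub (hD.isHCC_hClass hax)).2.1 _ (hD.isHCC_hClass hx) hZ x
    (mem_hClass.mpr .rfl) y (mem_hClass.mpr hxy.symm)

theorem MoranData.ncard_offspringGroup (hD : MoranData d J n r R) {u : List ℕ} {m : ℕ}
    (hu : u ∈ XLevel n r R m) :
    (offspringGroup hre m u).ncard = (SigmaSet n r R m).ncard := by
  have hsub := hD.hClass_subset_XLevel (M := M) hu
  rw [← (regroup_spec hre hsub (hD.isHCC_hClass hu)).2.2 u (mem_hClass.mpr .rfl)]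
  congr 1
  ext x
  simp only [offspringGroup, Set.mem_ofPred_eq, hD.mem_TSigma_iff hsub]
  constructor
  · rintro ⟨hx, hgx⟩
    have hcls : hClass M R (anc r R m x) = hClass M R u :=
      hgx ▸ hClass_eq_of_reachable (mem_hClass.mp (hD.groupOf_mem_hClass hre hx)).symm
    refine ⟨⟨hx, hcls ▸ mem_hClass.mpr .rfl⟩, ?_⟩
    rw [← hcls]
    exact hgx
  · rintro ⟨hxT, hgx⟩
    exact ⟨hxT.1, (hD.regroup_eq_groupOf hre hu ((hD.mem_TSigma_iff hsub).mpr hxT)).symm.trans hgx⟩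

def suffixMap (m : ℕ) (u : List ℕ) : List ℕ → List ℕ :=
  if h : ∃ f : List ℕ → List ℕ, Set.BijOn f (offspringGroup hre m u) (SigmaSet n r R m) then
    h.choose
  else id

theorem MoranData.bijOn_suffixMap (hD : MoranData d J n r R) {u : List ℕ} {m : ℕ}
    (hu : u ∈ XLevel n r R m) :
    Set.BijOn (suffixMap hre m u) (offspringGroup hre m u) (SigmaSet n r R m) := by
  have hfin : (offspringGroup hre m u).Finite := (hD.XLevel_finite (m + 1)).subset fun _ h => h.1
  have h : ∃ f : List ℕ → List ℕ, Set.BijOn f (offspringGroup hre m u) (SigmaSet n r R m) :=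
    hfin.exists_bijOn_of_encard_eq <| by
      rw [← hfin.cast_ncard_eq, ← (hD.SigmaSet_finite m).cast_ncard_eq,
        hD.ncard_offspringGroup hre hu]
  rw [suffixMap, dif_pos h]
  exact h.choose_spec

def levelMap : ℕ → List ℕ → List ℕ
  | 0 => id
  | m + 1 => fun x => levelMap m (groupOf hre m x) ++ suffixMap hre m (groupOf hre m x) x

theorem MoranData.bijOn_levelMap (hD : MoranData d J n r R) (m : ℕ) :
    Set.BijOn (levelMap hre m) (XLevel n r R m) (XLevel n r R m) := by
  induction m with
  | zero => exact Set.bijOn_id _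
  | succ m ih =>
    have hmem {x} (hx : x ∈ XLevel n r R (m + 1)) : x ∈ offspringGroup hre m (groupOf hre m x) :=
      ⟨hx, rfl⟩
    refine ⟨fun x hx => ?_, fun x hx x' hx' heq => ?_, fun y hy => ?_⟩
    · have hg := hD.groupOf_mem_XLevel hre hx
      exact (hD.mem_SigmaSet_iff (ih.mapsTo hg)).mp ((hD.bijOn_suffixMap hre hg).mapsTo (hmem hx))
    · have hg := hD.groupOf_mem_XLevel hre hx
      have hg' := hD.groupOf_mem_XLevel hre hx'
      have hanc := congrArg (anc r R m) heq
      simp only [levelMap, hD.anc_append (ih.mapsTo hg), hD.anc_append (ih.mapsTo hg')] at hanc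
      have hgg := ih.injOn hg hg' hanc
      simp only [levelMap, hgg, List.append_cancel_left_eq] at heq
      exact (hD.bijOn_suffixMap hre hg').injOn (hgg ▸ hmem hx) (hmem hx') heq
    · obtain ⟨u, hu, hu'⟩ := ih.surjOn (hD.anc_mem hy m.le_succ)
      obtain ⟨x, hx, hx'⟩ := (hD.bijOn_suffixMap hre hu).surjOn (hD.drop_mem_SigmaSet hy)
      refine ⟨x, hx.1, ?_⟩
      simp only [levelMap, hx.2, hu', hx']
      exact List.take_append_drop _ y

theorem MoranData.anc_levelMap_succ (hD : MoranData d J n r R) {x : List ℕ} {m : ℕ}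
    (hx : x ∈ XLevel n r R (m + 1)) :
    anc r R m (levelMap hre (m + 1) x) = levelMap hre m (groupOf hre m x) :=
  hD.anc_append ((hD.bijOn_levelMap hre m).mapsTo (hD.groupOf_mem_XLevel hre hx)) _

theorem MoranData.exists_anc_levelMap (hD : MoranData d J n r R) {x : List ℕ} {m j : ℕ}
    (hx : x ∈ XLevel n r R m) (hj : j ≤ m) :
    ∃ b ∈ XLevel n r R j, anc r R j (levelMap hre m x) = levelMap hre j b ∧
      (HorGraph M R).Reachable b (anc r R j x) := by
  induction m generalizing x with
  | zero =>
    obtain rfl : j = 0 := Nat.le_zero.mp hj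
    exact ⟨x, hx, hD.anc_self ((hD.bijOn_levelMap hre 0).mapsTo hx), by rw [hD.anc_self hx]⟩
  | succ m ih =>
    rcases hj.eq_or_lt with rfl | hj
    · exact ⟨x, hx, hD.anc_self ((hD.bijOn_levelMap hre _).mapsTo hx), by rw [hD.anc_self hx]⟩
    obtain ⟨b, hb, heq, hreach⟩ := ih (hD.groupOf_mem_XLevel hre hx) (Nat.le_of_lt_succ hj)
    refine ⟨b, hb, ?_, hreach.trans ?_⟩
    · rw [← hD.anc_anc (Nat.le_of_lt_succ hj), hD.anc_levelMap_succ hre hx, heq]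
    · rw [← hD.anc_anc (Nat.le_of_lt_succ hj) x]
      exact hD.horGraph_reachable_anc (mem_hClass.mp (hD.groupOf_mem_hClass hre hx)) j

theorem MoranData.anc_levelMap_succ_eq_of_reachable (hD : MoranData d J n r R) {b b' : List ℕ}
    {m : ℕ} (hb : b ∈ XLevel n r R (m + 1)) (hbb' : (HorGraph M R).Reachable b b') :
    anc r R m (levelMap hre (m + 1) b) = anc r R m (levelMap hre (m + 1) b') := by
  rw [hD.anc_levelMap_succ hre hb,
    hD.anc_levelMap_succ hre (hD.mem_XLevel_of_horGraph_reachable hbb' hb),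
    hD.groupOf_eq_of_reachable hre hb hbb']

def rearrangement (x : List ℕ) : List ℕ :=
  if h : ∃ m, x ∈ XLevel n r R m then levelMap hre (Nat.find h) x else x

theorem MoranData.rearrangement_eq (hD : MoranData d J n r R) {x : List ℕ} {m : ℕ}
    (hx : x ∈ XLevel n r R m) : rearrangement hre x = levelMap hre m x := by
  have h : ∃ m, x ∈ XLevel n r R m := ⟨m, hx⟩
  rw [rearrangement, dif_pos h, hD.eq_of_mem_XLevel (Nat.find_spec h) hx]

theorem MoranData.bijOn_rearrangement (hD : MoranData d J n r R) :
    Set.BijOn (rearrangement hre) (XV n r R) (XV n r R) := by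
  have hlevel (m : ℕ) : Set.BijOn (rearrangement hre) (XLevel n r R m) (XLevel n r R m) :=
    (hD.bijOn_levelMap hre m).congr fun x hx => (hD.rearrangement_eq hre hx).symm
  refine Set.bijOn_iUnion hlevel fun x hx y hy heq => ?_
  obtain ⟨m, hxm⟩ := Set.mem_iUnion.mp hx
  obtain ⟨m', hym⟩ := Set.mem_iUnion.mp hy
  obtain rfl := hD.eq_of_mem_XLevel ((hlevel m).mapsTo hxm) (heq ▸ (hlevel m').mapsTo hym)
  exact (hlevel m).injOn hxm hym heq

end Rearrangement

section Confluence

variable {Rel : List ℕ → List ℕ → Prop} {x y : List ℕ} {mx my : ℕ}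

def confluence (r : ℕ → ℝ) (R : ℝ) (Rel : List ℕ → List ℕ → Prop) (mx my : ℕ)
    (x y : List ℕ) : ℕ :=
  Nat.findGreatest (fun j => Rel (anc r R j x) (anc r R j y)) (min mx my)

theorem confluence_le_left : confluence r R Rel mx my x y ≤ mx :=
  (Nat.findGreatest_le _).trans (min_le_left _ _)

theorem confluence_le_right : confluence r R Rel mx my x y ≤ my :=
  (Nat.findGreatest_le _).trans (min_le_right _ _)

theorem rel_anc_confluence (hRel : Rel [] []) :
    Rel (anc r R (confluence r R Rel mx my x y) x) (anc r R (confluence r R Rel mx my x y) y) :=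
  Nat.findGreatest_spec (P := fun j => Rel (anc r R j x) (anc r R j y)) (Nat.zero_le _)
    (by simpa only [anc_zero] using hRel)

theorem le_confluence {j : ℕ} (hjx : j ≤ mx) (hjy : j ≤ my)
    (h : Rel (anc r R j x) (anc r R j y)) : j ≤ confluence r R Rel mx my x y :=
  Nat.le_findGreatest (le_min hjx hjy) h

/-- Both relations descend to the smaller of the two levels, where transitivity joins them. -/
theorem MoranData.confluence_add_confluence_le (hD : MoranData d J n r R) (hRel : Equivalence Rel)
    (hanc : ∀ j u v, Rel u v → Rel (anc r R j u) (anc r R j v)) {z : List ℕ} {mz : ℕ} :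
    confluence r R Rel mx mz x z + confluence r R Rel mz my z y ≤
      confluence r R Rel mx my x y + mz := by
  set a := confluence r R Rel mx mz x z
  set b := confluence r R Rel mz my z y
  have hxz := hanc (min a b) _ _ (rel_anc_confluence (hRel.refl []) : Rel (anc r R a x) _)
  have hzy := hanc (min a b) _ _ (rel_anc_confluence (hRel.refl []) : Rel (anc r R b z) _)
  rw [hD.anc_anc (min_le_left a b), hD.anc_anc (min_le_left a b)] at hxz
  rw [hD.anc_anc (min_le_right a b), hD.anc_anc (min_le_right a b)] at hzy
  have hmin := le_confluence (min_le_left _ _ |>.trans confluence_le_left)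
    (min_le_right _ _ |>.trans confluence_le_right) (hRel.trans hxz hzy)
  have : a ≤ mz := confluence_le_right
  have : b ≤ mz := confluence_le_left
  omega

variable {G : SimpleGraph (List ℕ)}

theorem MoranData.exists_add_le_one_add_two_mul_confluence_of_adj (hD : MoranData d J n r R)
    (hRel : Equivalence Rel) (hG : ∀ u v, G.Adj u v → (TreeGraph n r R).Adj u v ∨
      ∃ m, u ∈ XLevel n r R m ∧ v ∈ XLevel n r R m ∧ Rel u v)
    {u v : List ℕ} (huv : G.Adj u v) {mu : ℕ} (hu : u ∈ XLevel n r R mu) :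
    ∃ mv, v ∈ XLevel n r R mv ∧ mu + mv ≤ 1 + 2 * confluence r R Rel mu mv u v := by
  rcases hG u v huv with htree | ⟨m, hu', hv, hrel⟩
  · obtain ⟨m, ⟨hv, rfl⟩ | ⟨hu', rfl⟩⟩ := hD.treeGraph_adj_iff.mp htree
    · obtain rfl := hD.eq_of_mem_XLevel hu (hD.anc_mem hv m.le_succ)
      refine ⟨mu + 1, hv, ?_⟩
      have := le_confluence (Rel := Rel) (mx := mu) (my := mu + 1) le_rfl (by omega)
        (x := anc r R mu v) (y := v)
        (by rw [hD.anc_anc le_rfl]; exact hRel.refl _)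
      omega
    · obtain rfl := hD.eq_of_mem_XLevel hu hu'
      refine ⟨m, hD.anc_mem hu m.le_succ, ?_⟩
      have := le_confluence (Rel := Rel) (mx := m + 1) (my := m) (by omega) le_rfl
        (x := u) (y := anc r R m u)
        (by rw [hD.anc_anc le_rfl]; exact hRel.refl _)
      omega
  · obtain rfl := hD.eq_of_mem_XLevel hu hu'
    refine ⟨mu, hv, ?_⟩
    have := le_confluence (Rel := Rel) (x := u) (y := v) le_rfl le_rfl
      (by rwa [hD.anc_self hu, hD.anc_self hv])
    omega

theorem MoranData.add_le_length_add_two_mul_confluence (hD : MoranData d J n r R)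
    (hRel : Equivalence Rel) (hanc : ∀ j u v, Rel u v → Rel (anc r R j u) (anc r R j v))
    (hG : ∀ u v, G.Adj u v → (TreeGraph n r R).Adj u v ∨
      ∃ m, u ∈ XLevel n r R m ∧ v ∈ XLevel n r R m ∧ Rel u v)
    (p : G.Walk x y) (hx : x ∈ XLevel n r R mx) (hy : y ∈ XLevel n r R my) :
    mx + my ≤ p.length + 2 * confluence r R Rel mx my x y := by
  induction p generalizing mx with
  | @nil w =>
    obtain rfl := hD.eq_of_mem_XLevel hx hy
    have := le_confluence (x := w) (y := w) le_rfl le_rfl (hRel.refl (anc r R mx w))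
    rw [Walk.length_nil]
    omega
  | @cons x z y hadj p ih =>
    obtain ⟨mz, hz, hedge⟩ :=
      hD.exists_add_le_one_add_two_mul_confluence_of_adj hRel hG hadj hx
    have := ih hz hy
    have := hD.confluence_add_confluence_le hRel hanc (x := x) (y := y) (z := z) (mx := mx)
      (my := my) (mz := mz)
    rw [Walk.length_cons]
    omega

theorem MoranData.add_le_dist_add_two_mul_confluence (hD : MoranData d J n r R)
    (hRel : Equivalence Rel) (hanc : ∀ j u v, Rel u v → Rel (anc r R j u) (anc r R j v))
    (hG : ∀ u v, G.Adj u v → (TreeGraph n r R).Adj u v ∨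
      ∃ m, u ∈ XLevel n r R m ∧ v ∈ XLevel n r R m ∧ Rel u v)
    (hxy : G.Reachable x y) (hx : x ∈ XLevel n r R mx) (hy : y ∈ XLevel n r R my) :
    mx + my ≤ G.dist x y + 2 * confluence r R Rel mx my x y := by
  obtain ⟨p, hp⟩ := hxy.exists_walk_length_eq_dist
  exact hp ▸ hD.add_le_length_add_two_mul_confluence hRel hanc hG p hx hy

end Confluence

section Distances

variable {M : MoranStructure d J n r} {x y : List ℕ} {mx my : ℕ}

theorem MoranData.exists_treeGraph_walk_anc (hD : MoranData d J n r R) {m j : ℕ}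
    (hx : x ∈ XLevel n r R m) (hj : j ≤ m) :
    ∃ p : (TreeGraph n r R).Walk x (anc r R j x), p.length = m - j := by
  induction m generalizing x with
  | zero =>
    obtain rfl := Nat.le_zero.mp hj
    exact ⟨Walk.nil.copy rfl (hD.anc_self hx).symm, by simp⟩
  | succ m ih =>
    rcases hj.eq_or_lt with rfl | hj
    · exact ⟨Walk.nil.copy rfl (hD.anc_self hx).symm, by simp⟩
    have hadj : (TreeGraph n r R).Adj x (anc r R m x) :=
      hD.treeGraph_adj_iff.mpr ⟨m, Or.inr ⟨hx, rfl⟩⟩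
    obtain ⟨p, hp⟩ := ih (hD.anc_mem hx m.le_succ) (Nat.le_of_lt_succ hj)
    exact ⟨.cons hadj (p.copy rfl (hD.anc_anc (Nat.le_of_lt_succ hj) x)), by simp; omega⟩

theorem MoranData.exists_treeGraph_walk_of_anc_eq (hD : MoranData d J n r R) {j : ℕ}
    (hx : x ∈ XLevel n r R mx) (hy : y ∈ XLevel n r R my) (hjx : j ≤ mx) (hjy : j ≤ my)
    (h : anc r R j x = anc r R j y) :
    ∃ p : (TreeGraph n r R).Walk x y, p.length = mx + my - 2 * j := by
  obtain ⟨p, hp⟩ := hD.exists_treeGraph_walk_anc hx hjx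
  obtain ⟨q, hq⟩ := hD.exists_treeGraph_walk_anc hy hjy
  exact ⟨p.append (q.reverse.copy h.symm rfl), by simp [hp, hq]; omega⟩

theorem treeGraph_le_augGraph : TreeGraph n r R ≤ AugGraph M R := fun _ _ h => Or.inl h

theorem horGraph_le_augGraph : HorGraph M R ≤ AugGraph M R := fun _ _ h => Or.inr h

/-- Up to the horizontal confluence level, climb the tree; cross there along a horizontal
component, which has at most `L` vertices; then descend. -/
theorem MoranData.exists_augGraph_walk (hD : MoranData d J n r R) {L : ℕ}
    (hL : ∀ T, IsHCC M R T → T.Finite ∧ T.ncard ≤ L)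
    (hx : x ∈ XLevel n r R mx) (hy : y ∈ XLevel n r R my) :
    ∃ p : (AugGraph M R).Walk x y,
      p.length + 2 * confluence r R (HorGraph M R).Reachable mx my x y ≤ mx + my + L := by
  set l := confluence r R (HorGraph M R).Reachable mx my x y
  have hlx : l ≤ mx := confluence_le_left
  have hly : l ≤ my := confluence_le_right
  obtain ⟨p, hp⟩ := hD.exists_treeGraph_walk_anc hx hlx
  obtain ⟨q, hq⟩ := hD.exists_treeGraph_walk_anc hy hly
  obtain ⟨h, hh⟩ := exists_horGraph_walk_length_le (hL _ (hD.isHCC_hClass (hD.anc_mem hx hlx))).1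
    (hL _ (hD.isHCC_hClass (hD.anc_mem hx hlx))).2 (rel_anc_confluence .rfl)
  refine ⟨(p.mapLe treeGraph_le_augGraph).append
    ((h.mapLe horGraph_le_augGraph).append (q.mapLe treeGraph_le_augGraph).reverse), ?_⟩
  simp only [Walk.length_append, Walk.length_reverse, Walk.length_mapLe, hp, hq]
  omega

theorem MoranData.augGraph_dist_bounds (hD : MoranData d J n r R) {L : ℕ}
    (hL : ∀ T, IsHCC M R T → T.Finite ∧ T.ncard ≤ L)
    (hx : x ∈ XLevel n r R mx) (hy : y ∈ XLevel n r R my) :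
    mx + my ≤ (AugGraph M R).dist x y + 2 * confluence r R (HorGraph M R).Reachable mx my x y ∧
      (AugGraph M R).dist x y + 2 * confluence r R (HorGraph M R).Reachable mx my x y ≤
        mx + my + L := by
  obtain ⟨p, hp⟩ := hD.exists_augGraph_walk hL hx hy
  refine ⟨hD.add_le_dist_add_two_mul_confluence (HorGraph M R).reachable_is_equivalence
    (fun j _ _ h => hD.horGraph_reachable_anc h j) ?_ p.reachable hx hy,
    (Nat.add_le_add_right (dist_le p) _).trans hp⟩
  rintro u v (htree | ⟨hne, m, hm, hu, hv, hJ⟩)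
  · exact Or.inl htree
  · exact Or.inr ⟨m, hu, hv, Adj.reachable ⟨hne, m, hm, hu, hv, hJ⟩⟩

variable (hre : Rearrangeable M R)

theorem MoranData.reachable_anc_of_anc_levelMap_eq (hD : MoranData d J n r R)
    (hx : x ∈ XLevel n r R mx) (hy : y ∈ XLevel n r R my) {j : ℕ} (hjx : j ≤ mx) (hjy : j ≤ my)
    (h : anc r R j (levelMap hre mx x) = anc r R j (levelMap hre my y)) :
    (HorGraph M R).Reachable (anc r R j x) (anc r R j y) := by
  obtain ⟨b, hb, hbx, hbr⟩ := hD.exists_anc_levelMap hre hx hjx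
  obtain ⟨b', hb', hby, hbr'⟩ := hD.exists_anc_levelMap hre hy hjy
  obtain rfl : b = b' := (hD.bijOn_levelMap hre j).injOn hb hb' (hbx ▸ hby ▸ h)
  exact hbr.symm.trans hbr'

/-- A horizontal component is regrouped inside the children of a single vertex, so images of
points with horizontally connected ancestors at level `l` share their ancestor at level
`l - 1`. -/
theorem MoranData.anc_levelMap_eq_of_reachable_anc (hD : MoranData d J n r R)
    (hx : x ∈ XLevel n r R mx) (hy : y ∈ XLevel n r R my) {l : ℕ} (hlx : l ≤ mx) (hly : l ≤ my)
    (h : (HorGraph M R).Reachable (anc r R l x) (anc r R l y)) :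
    anc r R (l - 1) (levelMap hre mx x) = anc r R (l - 1) (levelMap hre my y) := by
  obtain ⟨b, hb, hbx, hbr⟩ := hD.exists_anc_levelMap hre hx hlx
  obtain ⟨b', hb', hby, hbr'⟩ := hD.exists_anc_levelMap hre hy hly
  cases l with
  | zero => simp only [zero_tsub, anc_zero]
  | succ k =>
    rw [Nat.add_sub_cancel, ← hD.anc_anc k.le_succ, ← hD.anc_anc k.le_succ (levelMap hre my y),
      hbx, hby]
    exact hD.anc_levelMap_succ_eq_of_reachable hre hb (hbr.trans (h.trans hbr'.symm))

theorem MoranData.treeGraph_dist_levelMap_bounds (hD : MoranData d J n r R)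
    (hx : x ∈ XLevel n r R mx) (hy : y ∈ XLevel n r R my) :
    mx + my ≤ (TreeGraph n r R).dist (levelMap hre mx x) (levelMap hre my y) +
        2 * confluence r R (HorGraph M R).Reachable mx my x y ∧
      (TreeGraph n r R).dist (levelMap hre mx x) (levelMap hre my y) +
        2 * confluence r R (HorGraph M R).Reachable mx my x y ≤ mx + my + 2 := by
  have hx' := (hD.bijOn_levelMap hre mx).mapsTo hx
  have hy' := (hD.bijOn_levelMap hre my).mapsTo hy
  have hlx : confluence r R (HorGraph M R).Reachable mx my x y ≤ mx := confluence_le_left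
  have hly : confluence r R (HorGraph M R).Reachable mx my x y ≤ my := confluence_le_right
  obtain ⟨p, hp⟩ := hD.exists_treeGraph_walk_of_anc_eq hx' hy' (by omega) (by omega)
    (hD.anc_levelMap_eq_of_reachable_anc hre hx hy hlx hly (rel_anc_confluence .rfl))
  have hlower := hD.add_le_dist_add_two_mul_confluence eq_equivalence
    (fun _ _ _ h => h ▸ rfl) (fun _ _ h => Or.inl h) p.reachable hx' hy'
  have hconf : confluence r R Eq mx my (levelMap hre mx x) (levelMap hre my y) ≤
      confluence r R (HorGraph M R).Reachable mx my x y :=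
    le_confluence confluence_le_left confluence_le_right
      (hD.reachable_anc_of_anc_levelMap_eq hre hx hy confluence_le_left confluence_le_right
        (rel_anc_confluence rfl))
  have hupper := dist_le p
  omega

end Distances

end MoranPaper

end

/-- if the induced augmented tree is rearrangeable, there is a
near-isometry between `(X, 𝔈)` and `(X, 𝔈_v)`. -/
theorem MoranPaper.statement11 (d : ℕ) (J : Set (MoranPaper.Pt d)) (n : ℕ → ℕ) (r : ℕ → ℝ)
    (R : ℝ) (hD : MoranPaper.MoranData d J n r R) (M : MoranPaper.MoranStructure d J n r)
    (hre : MoranPaper.Rearrangeable M R) :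
    ∃ (σ : List ℕ → List ℕ) (c : ℕ),
      Set.BijOn σ (MoranPaper.XV n r R) (MoranPaper.XV n r R) ∧
      ∀ x ∈ MoranPaper.XV n r R, ∀ y ∈ MoranPaper.XV n r R,
        |((MoranPaper.TreeGraph n r R).dist (σ x) (σ y) : ℤ)
            - ((MoranPaper.AugGraph M R).dist x y : ℤ)| ≤ c := by
  obtain ⟨L, hL⟩ := hre.1
  refine ⟨MoranPaper.rearrangement hre, L + 2, hD.bijOn_rearrangement hre, fun x hx y hy => ?_⟩
  obtain ⟨mx, hxm⟩ := Set.mem_iUnion.mp hx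
  obtain ⟨my, hym⟩ := Set.mem_iUnion.mp hy
  rw [hD.rearrangement_eq hre hxm, hD.rearrangement_eq hre hym]
  have haug := hD.augGraph_dist_bounds hL hxm hym
  have htree := hD.treeGraph_dist_levelMap_bounds hre hxm hym
  rw [abs_le]
  omega
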